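/- The subshift X is topologically transitive: for all nonempty open sets U, V ⊆ X there exists n ∈ ℤ with σ^n(U) ∩ V ≠ ∅. -/

import Mathlib

/-- The shift map σ on the full shift `{0,1}^ℤ`, `σ(x)_i = x_{i+1}`. -/
def shift (x : ℤ → Bool) : ℤ → Bool := fun i => x (i + 1)

/-- The iterate `σ^k` of the shift, for `k ∈ ℤ`. -/
def shiftZ (k : ℤ) (x : ℤ → Bool) : ℤ → Bool := fun i => x (i + k)

/-- `wlist n` is the list `[w_0, w_1, …, w_{2n+1}]` of the words of the construction:
`w_0 = 0`, `w_1 = 1`, and for `n ≥ 1`, `a ∈ {0,1}`,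
`w_{2n+a} = w_{2n-2} w_a w_{2n-2} ∏_{k=0}^{2n-1} (w_k^n w_{2n-2})`. -/
def wlist : ℕ → List (List Bool)
  | 0 => [[false], [true]]
  | n + 1 =>
    let prev := wlist n
    let w : ℕ → List Bool := fun k => prev.getD k []
    let base := w (2 * n)
    let tail := (List.range (2 * n + 2)).flatMap
      (fun k => (List.replicate (n + 1) (w k)).flatten ++ base)
    prev ++ [base ++ w 0 ++ base ++ tail, base ++ w 1 ++ base ++ tail]

/-- The word `w_n`. -/
def wrd (n : ℕ) : List Bool := (wlist n).getD n []

/-- The periodic point `u^ℤ` associated to a nonempty word `u`;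
it satisfies `(u^ℤ)_{m|u|+i} = u_i` for all `m ∈ ℤ`, `0 ≤ i < |u|`. -/
def perPt (u : List Bool) : ℤ → Bool := fun i => u.getD ((i % (u.length : ℤ)).toNat) false

/-- The union of the shift orbits of the points `w_n^ℤ`. -/
def Xgen : Set (ℤ → Bool) := {x | ∃ (n : ℕ) (k : ℤ), x = shiftZ k (perPt (wrd n))}

/-- The subshift `X`: the smallest subshift containing the points `w_n^ℤ`,
i.e. the closure of the union of their shift orbits. -/
def XX : Set (ℤ → Bool) := closure Xgen

/-- The word `u` occurs as a (contiguous) subword of the point `x`. -/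
def occursIn (u : List Bool) (x : ℤ → Bool) : Prop :=
  ∃ i : ℤ, ∀ j : ℕ, j < u.length → x (i + (j : ℤ)) = u.getD j false

/-! For `m < 2n + 2` the word `w_{2n+2}` contains the power `w_m^{n+1}`, so every window of
length at most `n` of a shift of `w_m^ℤ` is also a window of a shift of `w_{2n+2}^ℤ`.
Nonempty open sets `U, V` meeting `X` contain shifts of some `w_{m₁}^ℤ` and `w_{m₂}^ℤ` together
with cylinders around them; taking `n` large, both cylinders contain shifts of the single point
`w_{2n+2}^ℤ`, and a power of `σ` maps the one to the other. -/

def wpow {α : Type*} (u : List α) (r : ℕ) : List α := (List.replicate r u).flatten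

section wpow

variable {α : Type*} (u : List α)

lemma wpow_succ (r : ℕ) : wpow u (r + 1) = u ++ wpow u r := by
  simp [wpow, List.replicate_succ]

lemma length_wpow (r : ℕ) : (wpow u r).length = r * u.length := by
  simp [wpow, List.sum_replicate]

lemma getD_wpow (d : α) {r t : ℕ} (ht : t < r * u.length) :
    (wpow u r).getD t d = u.getD (t % u.length) d := by
  induction r generalizing t with
  | zero => omega
  | succ r ih =>
    rw [wpow_succ]
    rcases lt_or_ge t u.length with h | h
    · rw [List.getD_append _ _ _ _ h, Nat.mod_eq_of_lt h]
    · rw [List.getD_append_right _ _ _ _ h, ih (by rw [Nat.succ_mul] at ht; omega),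
        ← Nat.mod_eq_sub_mod h]

end wpow

lemma List.IsPrefix.getD_eq {α : Type*} {l₁ l₂ : List α} (h : l₁ <+: l₂) {i : ℕ}
    (hi : i < l₁.length) (d : α) : l₁.getD i d = l₂.getD i d := by
  obtain ⟨t, rfl⟩ := h
  exact (List.getD_append _ _ _ _ hi).symm

lemma length_wlist (n : ℕ) : (wlist n).length = 2 * n + 2 := by
  induction n with
  | zero => rfl
  | succ n ih =>
    simp only [wlist, List.length_append, ih, List.length_cons, List.length_nil]
    ring

lemma wlist_prefix_wlist {n n' : ℕ} (h : n ≤ n') : wlist n <+: wlist n' := by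
  induction n', h using Nat.le_induction with
  | base => exact List.prefix_refl _
  | succ n' _ ih => exact ih.trans ⟨_, rfl⟩

lemma getD_wlist {n k : ℕ} (hk : k < 2 * n + 2) : (wlist n).getD k [] = wrd k := by
  rcases le_total n k with h | h
  · exact (wlist_prefix_wlist h).getD_eq (by rw [length_wlist]; omega) []
  · exact ((wlist_prefix_wlist h).getD_eq (by rw [length_wlist]; omega) []).symm

lemma wrd_two_mul_add_two (n : ℕ) :
    wrd (2 * n + 2) = wrd (2 * n) ++ wrd 0 ++ wrd (2 * n) ++
      (List.range (2 * n + 2)).flatMap (fun k => wpow (wrd k) (n + 1) ++ wrd (2 * n)) := by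
  rw [← getD_wlist (n := n + 1) (by omega), wlist,
    List.getD_append_right _ _ _ _ (by rw [length_wlist]), length_wlist, Nat.sub_self]
  simp only [List.getD_cons_zero]
  rw [getD_wlist (k := 2 * n) (by omega), getD_wlist (k := 0) (by omega)]
  refine congrArg _ (List.flatMap_congr fun k hk => ?_)
  rw [getD_wlist (List.mem_range.1 hk)]
  rfl

lemma wpow_wrd_infix_wrd {m n : ℕ} (hm : m < 2 * n + 2) :
    wpow (wrd m) (n + 1) <:+: wrd (2 * n + 2) := by
  rw [wrd_two_mul_add_two, List.flatMap_def]
  have hmem : wpow (wrd m) (n + 1) ++ wrd (2 * n) ∈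
      (List.range (2 * n + 2)).map (fun k => wpow (wrd k) (n + 1) ++ wrd (2 * n)) :=
    List.mem_map_of_mem (List.mem_range.2 hm)
  exact (List.prefix_append _ _).isInfix.trans <|
    (List.infix_of_mem_flatten hmem).trans (List.suffix_append _ _).isInfix

lemma ne_nil_of_mem_wlist {n : ℕ} {w : List Bool} (hw : w ∈ wlist n) : w ≠ [] := by
  induction n generalizing w with
  | zero =>
    simp only [wlist, List.mem_cons, List.not_mem_nil, or_false] at hw
    rcases hw with rfl | rfl <;> simp
  | succ n ih =>
    have hbase : (wlist n).getD (2 * n) [] ≠ [] := by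
      rw [List.getD_eq_getElem _ _ (by rw [length_wlist]; omega)]
      exact ih (List.getElem_mem _)
    simp only [wlist, List.mem_append, List.mem_cons, List.not_mem_nil, or_false] at hw
    rcases hw with hw | rfl | rfl
    · exact ih hw
    all_goals
      intro h
      simp only [List.append_eq_nil_iff] at h
      exact hbase h.1.1.1

lemma wrd_ne_nil (m : ℕ) : wrd m ≠ [] :=
  ne_nil_of_mem_wlist <| by
    rw [wrd, List.getD_eq_getElem _ _ (by rw [length_wlist]; omega)]
    exact List.getElem_mem _

lemma perPt_congr {u : List Bool} {a b : ℤ} (h : a % u.length = b % u.length) :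
    perPt u a = perPt u b := by
  rw [perPt, perPt, h]

lemma perPt_natCast_of_lt {u : List Bool} {t : ℕ} (ht : t < u.length) :
    perPt u t = u.getD t false := by
  rw [perPt, ← Int.natCast_mod, Int.toNat_natCast, Nat.mod_eq_of_lt ht]

lemma perPt_natCast_eq_getD_wpow (u : List Bool) {r t : ℕ} (ht : t < r * u.length) :
    perPt u t = (wpow u r).getD t false := by
  rw [getD_wpow _ _ ht, perPt, ← Int.natCast_mod, Int.toNat_natCast]

lemma perPt_append_wpow_append {p q u : List Bool} {r t : ℕ} (ht : t < r * u.length) :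
    perPt (p ++ wpow u r ++ q) (p.length + t : ℕ) = perPt u t := by
  have hlt : p.length + t < (p ++ wpow u r).length := by
    rw [List.length_append, length_wpow]; omega
  rw [perPt_natCast_of_lt (hlt.trans_le (by simp)), List.getD_append _ _ _ _ hlt,
    List.getD_append_right _ _ _ _ (by omega), Nat.add_sub_cancel_left,
    perPt_natCast_eq_getD_wpow u ht]

lemma exists_shiftZ_perPt_eqOn_Icc {u v : List Bool} (hu : u ≠ []) {r M : ℕ}
    (huv : wpow u r <:+: v) (hr : 2 * M + 2 ≤ r) (k : ℤ) :
    ∃ s : ℤ, Set.EqOn (shiftZ s (perPt v)) (shiftZ k (perPt u)) (Set.Icc (-M) M) := by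
  obtain ⟨p, q, rfl⟩ := huv
  have hlen : 0 < u.length := List.length_pos_iff.2 hu
  set c := (k - M) % u.length with hc
  have hc₀ : 0 ≤ c := Int.emod_nonneg _ (by omega)
  have hc₁ : c < u.length := Int.emod_lt_of_pos _ (by omega)
  -- reading `v^ℤ` from position `|p| + c + M + i` stays inside `u^r`, in phase with `σ^k u^ℤ`
  refine ⟨p.length + c + M, fun i hi => ?_⟩
  obtain ⟨t, ht⟩ : ∃ t : ℕ, (t : ℤ) = c + (i + M) := ⟨_, Int.toNat_of_nonneg (by grind)⟩
  have htr : t < r * u.length := by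
    have ht' : t < u.length + 2 * M + 1 := by grind
    nlinarith [Nat.mul_le_mul_right u.length hr]
  calc perPt (p ++ wpow u r ++ q) (i + (p.length + c + M))
      = perPt (p ++ wpow u r ++ q) (p.length + t : ℕ) := by push_cast; congr 1; omega
    _ = perPt u t := perPt_append_wpow_append htr
    _ = perPt u (i + k) := perPt_congr <| by
      rw [ht, hc, Int.emod_add_emod]; congr 1; ring

lemma exists_eqOn_Icc_mem_of_isOpen {α : Type*} [TopologicalSpace α] {W : Set (ℤ → α)}
    (hW : IsOpen W) {x : ℤ → α} (hx : x ∈ W) :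
    ∃ M : ℕ, ∀ z, Set.EqOn z x (Set.Icc (-M) M) → z ∈ W := by
  obtain ⟨I, u, hxu, hsub⟩ := isOpen_pi_iff.mp hW x hx
  refine ⟨I.sup Int.natAbs, fun z hz => hsub fun i hi => ?_⟩
  have hiM : i.natAbs ≤ I.sup Int.natAbs := Finset.le_sup hi
  have hzx : z i = x i := hz ⟨by omega, by omega⟩
  exact hzx ▸ (hxu i hi).2

lemma shiftZ_shiftZ (a b : ℤ) (x : ℤ → Bool) : shiftZ a (shiftZ b x) = shiftZ (a + b) x := by
  funext i
  simp only [shiftZ, add_assoc]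

lemma shiftZ_perPt_wrd_mem_XX (s : ℤ) (n : ℕ) : shiftZ s (perPt (wrd n)) ∈ XX :=
  subset_closure ⟨n, s, rfl⟩

/-- The subshift `X` is topologically transitive: for all nonempty (relatively) open
subsets `U, V` of `X` there is `n ∈ ℤ` with `σ^n(U) ∩ V ≠ ∅`. -/
theorem stmt8 :
    ∀ U V : Set (ℤ → Bool), IsOpen U → IsOpen V →
      (U ∩ XX).Nonempty → (V ∩ XX).Nonempty →
      ∃ n : ℤ, (shiftZ n '' (U ∩ XX) ∩ (V ∩ XX)).Nonempty := by
  rintro U V hU hV ⟨x, hxU, hxX⟩ ⟨y, hyV, hyX⟩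
  obtain ⟨_, hxU', m₁, k₁, rfl⟩ := mem_closure_iff.mp hxX U hU hxU
  obtain ⟨_, hyV', m₂, k₂, rfl⟩ := mem_closure_iff.mp hyX V hV hyV
  obtain ⟨M₁, hM₁⟩ := exists_eqOn_Icc_mem_of_isOpen hU hxU'
  obtain ⟨M₂, hM₂⟩ := exists_eqOn_Icc_mem_of_isOpen hV hyV'
  set n := m₁ + m₂ + 2 * (M₁ + M₂) + 1
  obtain ⟨s₁, hs₁⟩ := exists_shiftZ_perPt_eqOn_Icc (wrd_ne_nil m₁)
    (wpow_wrd_infix_wrd (m := m₁) (n := n) (by omega)) (M := M₁) (by omega) k₁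
  obtain ⟨s₂, hs₂⟩ := exists_shiftZ_perPt_eqOn_Icc (wrd_ne_nil m₂)
    (wpow_wrd_infix_wrd (m := m₂) (n := n) (by omega)) (M := M₂) (by omega) k₂
  refine ⟨s₂ - s₁, _, ⟨_, ⟨hM₁ _ hs₁, shiftZ_perPt_wrd_mem_XX _ _⟩, ?_⟩,
    hM₂ _ hs₂, shiftZ_perPt_wrd_mem_XX _ _⟩
  rw [shiftZ_shiftZ, sub_add_cancel]
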